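/- Define φd(ε)(id,iq) = Ld(id − 3εα₃₀Ld²id² − εα₁₂Lq²iq² − 4εα₄₀Ld³id³ − 2εα₂₂LdLq²id·iq²) and φq(ε)(id,iq) = Lq(iq − 2εα₁₂LdLq·id·iq − 2εα₂₂Ld²Lq·id²iq − 4εα₀₄Lq³iq³). Define the current maps Id(ε)(x,y) = x/Ld + 3εα₃₀x² + εα₁₂y² + 4εα₄₀x³ + 2εα₂₂xy² and Iq(ε)(x,y) = y/Lq + 2εα₁₂xy + 2εα₂₂x²y + 4εα₀₄y³. Then for fixed (id,iq), the functions ε ↦ Id(ε)(φd(ε), φq(ε)) − id and ε ↦ Iq(ε)(φd(ε), φq(ε)) − iq vanish at ε=0 together with their first derivatives at ε=0; i.e. the composition equals (id,iq) up to O(ε²). -/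

import Mathlib

/-! Both current maps have the form `I ε z = L⁻¹ z + ε N z` and the flux maps are
`φ ε = L (i - ε N (L i))`, with `L = diag(Ld, Lq)` and `φ 0 = L i`. Hence the residual is
`I ε (φ ε) - i = ε (N (φ ε) - N (φ 0))`, a product of `ε` with a function that is
continuous and vanishes at `0`, so its value and its derivative at `0` vanish. -/

theorem hasDerivAt_sub_smul_of_continuousAt {𝕜 E : Type*} [NontriviallyNormedField 𝕜]
    [NormedAddCommGroup E] [NormedSpace 𝕜 E] {g : 𝕜 → E} {a : 𝕜} (hg : ContinuousAt g a) :
    HasDerivAt (fun x => (x - a) • g x) (g a) a := by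
  rw [hasDerivAt_iff_tendsto_slope]
  refine (hg.tendsto.mono_left nhdsWithin_le_nhds).congr' ?_
  filter_upwards [self_mem_nhdsWithin] with x hx
  rw [slope_def_module, sub_self, zero_smul, sub_zero, smul_smul,
    inv_mul_cancel₀ (sub_ne_zero.2 hx), one_smul]

theorem eq_zero_and_deriv_eq_zero_of_eq_mul_sub {f N : ℝ → ℝ} (hN : ContinuousAt N 0)
    (hf : ∀ ε, f ε = ε * (N ε - N 0)) : f 0 = 0 ∧ deriv f 0 = 0 := by
  refine ⟨by simp [hf], ?_⟩
  have hderiv := hasDerivAt_sub_smul_of_continuousAt (g := fun ε => N ε - N 0) (a := 0)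
    (hN.sub continuousAt_const)
  simp only [sub_zero, sub_self, smul_eq_mul] at hderiv
  rw [funext hf, hderiv.deriv]

/-- The approximate flux-current inversion of the saturated PMSM model is
correct to first order in the saturation coefficients: for fixed currents, the
composition of the current maps with the first-order flux maps equals the
currents up to `O(ε²)` (value and first derivative in `ε` vanish at `ε = 0`). -/
theorem stmt_5 (Ld Lq α30 α12 α40 α22 α04 id_ iq_ : ℝ)
    (hLd : Ld ≠ 0) (hLq : Lq ≠ 0)
    (φd φq : ℝ → ℝ) (Id_ Iq_ : ℝ → ℝ → ℝ → ℝ)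
    (hφd : ∀ ε, φd ε = Ld*(id_ - 3*ε*α30*Ld^2*id_^2 - ε*α12*Lq^2*iq_^2
      - 4*ε*α40*Ld^3*id_^3 - 2*ε*α22*Ld*Lq^2*id_*iq_^2))
    (hφq : ∀ ε, φq ε = Lq*(iq_ - 2*ε*α12*Ld*Lq*id_*iq_
      - 2*ε*α22*Ld^2*Lq*id_^2*iq_ - 4*ε*α04*Lq^3*iq_^3))
    (hId : ∀ ε x y, Id_ ε x y = x/Ld + 3*ε*α30*x^2 + ε*α12*y^2
      + 4*ε*α40*x^3 + 2*ε*α22*x*y^2)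
    (hIq : ∀ ε x y, Iq_ ε x y = y/Lq + 2*ε*α12*x*y + 2*ε*α22*x^2*y
      + 4*ε*α04*y^3) :
    ((fun ε => Id_ ε (φd ε) (φq ε) - id_) 0 = 0 ∧
      deriv (fun ε => Id_ ε (φd ε) (φq ε) - id_) 0 = 0) ∧
    ((fun ε => Iq_ ε (φd ε) (φq ε) - iq_) 0 = 0 ∧
      deriv (fun ε => Iq_ ε (φd ε) (φq ε) - iq_) 0 = 0) := by
  have hφd_cont : Continuous φd := by rw [funext hφd]; fun_prop
  have hφq_cont : Continuous φq := by rw [funext hφq]; fun_prop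
  constructor
  · refine eq_zero_and_deriv_eq_zero_of_eq_mul_sub (f := fun ε => Id_ ε (φd ε) (φq ε) - id_)
      (N := fun ε => 3*α30*φd ε^2 + α12*φq ε^2 + 4*α40*φd ε^3 + 2*α22*φd ε*φq ε^2)
      (by fun_prop) fun ε => ?_
    simp only [hId, hφd, hφq]
    field_simp
    ring
  · refine eq_zero_and_deriv_eq_zero_of_eq_mul_sub (f := fun ε => Iq_ ε (φd ε) (φq ε) - iq_)
      (N := fun ε => 2*α12*φd ε*φq ε + 2*α22*φd ε^2*φq ε + 4*α04*φq ε^3)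
      (by fun_prop) fun ε => ?_
    simp only [hIq, hφd, hφq]
    field_simp
    ring
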